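/- Let ε > 0, let f : [0,1] → ℝ be continuous with ∫₀¹ f(s) ds = 0, and let u be twice continuously differentiable on [0,1], satisfying −ε u''(x) + u'(x) = f(x) on (0,1) and u(0) = u(1) = 0. Let n ≥ 1, h = 1/n, and let u_I be the piecewise linear interpolant of u on the uniform mesh x_i = i·h. Then (∫₀¹ (u(x) − u_I(x))² dx)^{1/2} ≤ (2/(ε π)) h² ‖f‖_∞, where ‖f‖_∞ = sup_{s∈[0,1]} |f(s)|. -/

import Mathlib

/-!
The derivative `w = u'` solves `-ε w' + w = f`, and `u(0) = u(1)` together with `∫ f = 0` gives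
`w(0) = w(1)`. When `-ε w' + w ≤ M`, the function `exp(-x/ε) (w - M)` is nondecreasing, so for a
periodic `w` it is nonpositive; applied to `±u'` this gives `|u'| ≤ ‖f‖_∞`, and the equation then
gives `|u''| ≤ 2‖f‖_∞/ε`. On each cell, `±(u - u_I) + (K/2)(x - x_{i-1})(x_i - x)` with
`K ≥ |u''|` is concave and vanishes at the nodes, hence `|u - u_I| ≤ K h²/8` pointwise. So the
error is at most `h² ‖f‖_∞/(4ε)` in sup norm, hence in `L²(0,1)`, and `1/4 ≤ 2/π`.
-/

open Set MeasureTheory intervalIntegral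

theorem neg_le_sub_affine_of_deriv2_le {u u' u'' : ℝ → ℝ} {a b c d K x : ℝ}
    (hu : ContinuousOn u (Icc a b))
    (hu' : ∀ t ∈ Ioo a b, HasDerivAt u (u' t) t)
    (hu'' : ∀ t ∈ Ioo a b, HasDerivAt u' (u'' t) t)
    (hK : ∀ t ∈ Ioo a b, u'' t ≤ K)
    (ha : u a = c * a + d) (hb : u b = c * b + d) (hx : x ∈ Icc a b) :
    -(K / 2 * ((x - a) * (b - x))) ≤ u x - (c * x + d) := by
  set ψ : ℝ → ℝ := fun t ↦ u t - (c * t + d) + K / 2 * ((t - a) * (b - t))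
  set ψ' : ℝ → ℝ := fun t ↦ u' t - c + K / 2 * ((b - t) - (t - a))
  have hψ' : ∀ t ∈ Ioo a b, HasDerivAt ψ (ψ' t) t := fun t ht ↦ by
    have hp : HasDerivAt (fun t ↦ (t - a) * (b - t)) (1 * (b - t) + (t - a) * (-1)) t :=
      ((hasDerivAt_id' t).sub_const a).mul ((hasDerivAt_id' t).const_sub b)
    exact ((hu' t ht).sub (((hasDerivAt_id' t).const_mul c).add_const d)).add
      (hp.const_mul (K / 2)) |>.congr_deriv (by ring)
  have hψ'' : ∀ t ∈ Ioo a b, HasDerivAt ψ' (u'' t - K) t := fun t ht ↦ by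
    have hp : HasDerivAt (fun t ↦ (b - t) - (t - a)) (-1 - 1) t :=
      ((hasDerivAt_id' t).const_sub b).sub ((hasDerivAt_id' t).sub_const a)
    exact ((hu'' t ht).sub_const c).add (hp.const_mul (K / 2)) |>.congr_deriv (by ring)
  have hconc : ConcaveOn ℝ (Icc a b) ψ := by
    refine concaveOn_of_hasDerivWithinAt2_nonpos (convex_Icc a b)
      (hu.sub (by fun_prop) |>.add (by fun_prop)) (f' := ψ') (f'' := fun t ↦ u'' t - K)
      ?_ ?_ ?_ <;> rw [interior_Icc]
    · exact fun t ht ↦ (hψ' t ht).hasDerivWithinAt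
    · exact fun t ht ↦ (hψ'' t ht).hasDerivWithinAt
    · exact fun t ht ↦ sub_nonpos.mpr (hK t ht)
  have hab : a ≤ b := hx.1.trans hx.2
  have := hconc.min_le_of_mem_Icc (left_mem_Icc.mpr hab) (right_mem_Icc.mpr hab) hx
  simp only [ψ, ha, hb, sub_self, zero_mul, mul_zero, add_zero, min_self] at this
  linarith

theorem abs_sub_affine_le_of_abs_deriv2_le {u u' u'' : ℝ → ℝ} {a b c d K x : ℝ}
    (hu : ContinuousOn u (Icc a b))
    (hu' : ∀ t ∈ Ioo a b, HasDerivAt u (u' t) t)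
    (hu'' : ∀ t ∈ Ioo a b, HasDerivAt u' (u'' t) t)
    (hK : ∀ t ∈ Ioo a b, |u'' t| ≤ K)
    (ha : u a = c * a + d) (hb : u b = c * b + d) (hx : x ∈ Icc a b) :
    |u x - (c * x + d)| ≤ K / 2 * ((x - a) * (b - x)) := by
  have lower := neg_le_sub_affine_of_deriv2_le hu hu' hu'' (fun t ht ↦ (abs_le.mp (hK t ht)).2)
    ha hb hx
  have upper := neg_le_sub_affine_of_deriv2_le (u := -u) (u' := -u') (u'' := -u'') (c := -c)
    (d := -d) hu.neg (fun t ht ↦ (hu' t ht).neg) (fun t ht ↦ (hu'' t ht).neg)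
    (fun t ht ↦ neg_le.mp (abs_le.mp (hK t ht)).1) (by simp [ha]; ring) (by simp [hb]; ring) hx
  simp only [Pi.neg_apply] at upper
  exact abs_le.mpr ⟨lower, by linarith⟩

theorem IsCompact.le_ciSup_of_continuousOn {X : Type*} [TopologicalSpace X] {K : Set X}
    (hK : IsCompact K) {g : X → ℝ} (hg : ContinuousOn g K) {x : X} (hx : x ∈ K) :
    g x ≤ ⨆ s : K, g s :=
  le_ciSup (f := fun s : K ↦ g s)
    (by simpa only [image_eq_range] using hK.bddAbove_image hg) ⟨x, hx⟩

theorem exists_mem_mesh_cell {n : ℕ} (hn : 1 ≤ n) {h x : ℝ} (hh : 0 < h)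
    (hx : x ∈ Icc 0 (n * h)) :
    ∃ i : ℕ, 1 ≤ i ∧ i ≤ n ∧ x ∈ Icc (((i : ℝ) - 1) * h) ((i : ℝ) * h) := by
  set k := ⌈x / h⌉₊
  have hk : (k : ℝ) - 1 < x / h ∧ x / h ≤ k :=
    ⟨by linarith [Nat.ceil_lt_add_one (div_nonneg hx.1 hh.le)], Nat.le_ceil _⟩
  refine ⟨max 1 k, le_max_left _ _, max_le hn (Nat.ceil_le.mpr ?_), ?_, ?_⟩
  · rw [div_le_iff₀ hh]; exact hx.2
  · rcases le_total k 1 with hc | hc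
    · rw [max_eq_left hc]; simpa using hx.1
    · rw [max_eq_right hc]; exact ((lt_div_iff₀ hh).mp hk.1).le
  · rw [← div_le_iff₀ hh]; exact hk.2.trans (by exact_mod_cast le_max_right 1 k)

theorem abs_sub_interpolant_le {u u' u'' uI : ℝ → ℝ} {n : ℕ} {h K x : ℝ} (hn : 1 ≤ n)
    (hh : 0 < h) (hu : ContinuousOn u (Icc 0 (n * h)))
    (hu' : ∀ t ∈ Ioo 0 (n * h), HasDerivAt u (u' t) t)
    (hu'' : ∀ t ∈ Ioo 0 (n * h), HasDerivAt u' (u'' t) t)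
    (hK : ∀ t ∈ Ioo 0 (n * h), |u'' t| ≤ K)
    (hnode : ∀ i : ℕ, i ≤ n → uI ((i : ℝ) * h) = u ((i : ℝ) * h))
    (haff : ∀ i : ℕ, 1 ≤ i → i ≤ n → ∃ c d : ℝ,
      ∀ x ∈ Icc (((i : ℝ) - 1) * h) ((i : ℝ) * h), uI x = c * x + d)
    (hx : x ∈ Icc 0 (n * h)) :
    |u x - uI x| ≤ K * h ^ 2 / 8 := by
  obtain ⟨i, hi1, hin, hxi⟩ := exists_mem_mesh_cell hn hh hx
  obtain ⟨c, d, hcd⟩ := haff i hi1 hin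
  have hi : (1 : ℝ) ≤ i := by exact_mod_cast hi1
  have hcell : Icc (((i : ℝ) - 1) * h) (i * h) ⊆ Icc 0 (n * h) :=
    Icc_subset_Icc (by nlinarith) (by gcongr)
  have hcell' : Ioo (((i : ℝ) - 1) * h) (i * h) ⊆ Ioo 0 (n * h) :=
    Ioo_subset_Ioo (by nlinarith) (by gcongr)
  have hleft : u (((i : ℝ) - 1) * h) = c * (((i : ℝ) - 1) * h) + d := by
    rw [← hcd _ (left_mem_Icc.mpr (by nlinarith))]
    have := hnode (i - 1) (by omega)
    rwa [Nat.cast_sub hi1, Nat.cast_one, eq_comm] at this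
  have hright : u (i * h) = c * (i * h) + d := by
    rw [← hcd _ (right_mem_Icc.mpr (by nlinarith)), hnode i hin]
  have herr := abs_sub_affine_le_of_abs_deriv2_le (hu.mono hcell)
    (fun t ht ↦ hu' t (hcell' ht)) (fun t ht ↦ hu'' t (hcell' ht))
    (fun t ht ↦ hK t (hcell' ht)) hleft hright hxi
  have hK0 : 0 ≤ K :=
    (abs_nonneg _).trans (hK (((i : ℝ) - 1 / 2) * h) (hcell' ⟨by nlinarith, by nlinarith⟩))
  have hamgm : (x - ((i : ℝ) - 1) * h) * (i * h - x) ≤ h ^ 2 / 4 := by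
    nlinarith [sq_nonneg (x - ((i : ℝ) - 1) * h - (i * h - x))]
  rw [hcd x hxi]
  calc |u x - (c * x + d)| ≤ K / 2 * ((x - ((i : ℝ) - 1) * h) * (i * h - x)) := herr
    _ ≤ K / 2 * (h ^ 2 / 4) := by gcongr
    _ = K * h ^ 2 / 8 := by ring

theorem le_of_neg_mul_deriv_add_le {w w' : ℝ → ℝ} {ε a b M x : ℝ} (hε : 0 < ε) (hab : a < b)
    (hw : ContinuousOn w (Icc a b)) (hw' : ∀ t ∈ Ioo a b, HasDerivAt w (w' t) t)
    (hle : ∀ t ∈ Ioo a b, -ε * w' t + w t ≤ M) (hper : w a = w b) (hx : x ∈ Icc a b) :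
    w x ≤ M := by
  set E : ℝ → ℝ := fun t ↦ Real.exp (-t / ε)
  have hE : ∀ t, HasDerivAt E (E t * (-1 / ε)) t := fun t ↦
    (Real.hasDerivAt_exp _).comp t ((hasDerivAt_neg t).div_const ε)
  have hmono : MonotoneOn (fun t ↦ E t * (w t - M)) (Icc a b) := by
    refine monotoneOn_of_hasDerivWithinAt_nonneg (convex_Icc a b)
      ((by fun_prop : Continuous E).continuousOn.mul (hw.sub continuousOn_const))
      (f' := fun t ↦ E t / ε * (M - (-ε * w' t + w t))) ?_ ?_ <;> rw [interior_Icc]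
    · refine fun t ht ↦ (((hE t).mul ((hw' t ht).sub_const M)).congr_deriv ?_).hasDerivWithinAt
      field_simp; ring
    · exact fun t ht ↦ mul_nonneg (by positivity) (sub_nonneg.mpr (hle t ht))
  have hEab : E b < E a := Real.exp_lt_exp.mpr (by gcongr)
  have hwa : w a ≤ M := by
    have := hmono (left_mem_Icc.mpr hab.le) (right_mem_Icc.mpr hab.le) hab.le
    simp only [hper] at this
    nlinarith
  have := hmono hx (right_mem_Icc.mpr hab.le) hx.2
  have hEx : 0 < E x := Real.exp_pos _
  have hEb : 0 < E b := Real.exp_pos _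
  simp only [← hper] at this
  nlinarith

theorem abs_le_of_neg_mul_deriv_add_eq {w w' g : ℝ → ℝ} {ε a b M x : ℝ} (hε : 0 < ε)
    (hab : a < b) (hw : ContinuousOn w (Icc a b)) (hw' : ∀ t ∈ Ioo a b, HasDerivAt w (w' t) t)
    (hode : ∀ t ∈ Ioo a b, -ε * w' t + w t = g t) (hg : ∀ t ∈ Ioo a b, |g t| ≤ M)
    (hper : w a = w b) (hx : x ∈ Icc a b) : |w x| ≤ M := by
  refine abs_le.mpr ⟨neg_le.mp ?_, le_of_neg_mul_deriv_add_le hε hab hw hw'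
    (fun t ht ↦ hode t ht ▸ (le_abs_self _).trans (hg t ht)) hper hx⟩
  refine le_of_neg_mul_deriv_add_le (w := -w) hε hab hw.neg (fun t ht ↦ (hw' t ht).neg)
    (fun t ht ↦ ?_) (by simp [hper]) hx
  simp only [Pi.neg_apply]
  linarith [hode t ht, neg_abs_le (g t), hg t ht]

theorem deriv_eq_deriv_of_integral_eq_zero {u u' u'' f : ℝ → ℝ} {ε a b : ℝ} (hε : ε ≠ 0)
    (hab : a ≤ b) (hu : ContinuousOn u (Icc a b)) (hu'c : ContinuousOn u' (Icc a b))
    (hu' : ∀ t ∈ Ioo a b, HasDerivAt u (u' t) t) (hu'' : ∀ t ∈ Ioo a b, HasDerivAt u' (u'' t) t)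
    (hode : ∀ t ∈ Ioo a b, -ε * u'' t + u' t = f t) (hf : IntervalIntegrable f volume a b)
    (hf0 : ∫ t in a..b, f t = 0) (huab : u a = u b) : u' a = u' b := by
  have hftc : ∫ t in a..b, f t = (u b - ε * u' b) - (u a - ε * u' a) :=
    integral_eq_sub_of_hasDerivAt_of_le hab (hu.sub (hu'c.const_smul ε))
      (fun t ht ↦ ((hu' t ht).sub ((hu'' t ht).const_mul ε)).congr_deriv
        (by rw [← hode t ht]; ring)) hf
  have : ε * (u' b - u' a) = 0 := by linarith
  linarith [(mul_eq_zero.mp this).resolve_left hε]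

theorem sqrt_integral_sq_le {φ : ℝ → ℝ} {a b C : ℝ} (hab : a ≤ b)
    (hφ : ∀ x ∈ Icc a b, |φ x| ≤ C) :
    √(∫ x in a..b, φ x ^ 2) ≤ C * √(b - a) := by
  have hC : 0 ≤ C := (abs_nonneg _).trans (hφ a (left_mem_Icc.mpr hab))
  have hint : ∫ x in a..b, φ x ^ 2 ≤ C ^ 2 * (b - a) := by
    refine (le_abs_self _).trans ?_
    have := norm_integral_le_of_norm_le_const (a := a) (b := b) (f := fun x ↦ φ x ^ 2)
      (C := C ^ 2) fun x hx ↦ by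
        rw [uIoc_of_le hab] at hx
        simpa only [Real.norm_eq_abs, abs_pow] using
          pow_le_pow_left₀ (abs_nonneg _) (hφ x (Ioc_subset_Icc_self hx)) 2
    rwa [abs_of_nonneg (sub_nonneg.mpr hab)] at this
  calc √(∫ x in a..b, φ x ^ 2) ≤ √(C ^ 2 * (b - a)) := Real.sqrt_le_sqrt hint
    _ = C * √(b - a) := by rw [Real.sqrt_mul (sq_nonneg C), Real.sqrt_sq hC]

theorem statement19_general (ε : ℝ) (hε : 0 < ε) (f : ℝ → ℝ)
    (hf : ContinuousOn f (Set.Icc 0 1))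
    (hf0 : (∫ s in (0 : ℝ)..1, f s) = 0)
    (u u' u'' : ℝ → ℝ)
    (hu' : ∀ x ∈ Set.Icc (0 : ℝ) 1, HasDerivWithinAt u (u' x) (Set.Icc 0 1) x)
    (hu'' : ∀ x ∈ Set.Icc (0 : ℝ) 1, HasDerivWithinAt u' (u'' x) (Set.Icc 0 1) x)
    (hode : ∀ x ∈ Set.Ioo (0 : ℝ) 1, -ε * u'' x + u' x = f x)
    (hu0 : u 0 = 0) (hu1 : u 1 = 0)
    (n : ℕ) (hn : 1 ≤ n) (h : ℝ) (hh : h = 1 / n)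
    (uI : ℝ → ℝ)
    (hnode : ∀ i : ℕ, i ≤ n → uI ((i : ℝ) * h) = u ((i : ℝ) * h))
    (haff : ∀ i : ℕ, 1 ≤ i → i ≤ n → ∃ c d : ℝ,
      ∀ x ∈ Set.Icc (((i : ℝ) - 1) * h) ((i : ℝ) * h), uI x = c * x + d) :
    Real.sqrt (∫ x in (0 : ℝ)..1, (u x - uI x) ^ 2) ≤
      2 / (ε * Real.pi) * h ^ 2 * ⨆ s : Set.Icc (0 : ℝ) 1, |f (s : ℝ)| := by
  set M := ⨆ s : Set.Icc (0 : ℝ) 1, |f (s : ℝ)|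
  have hfM : ∀ x ∈ Icc (0 : ℝ) 1, |f x| ≤ M := fun x hx ↦
    isCompact_Icc.le_ciSup_of_continuousOn hf.abs hx
  have hu'i : ∀ x ∈ Ioo (0 : ℝ) 1, HasDerivAt u (u' x) x := fun x hx ↦
    (hu' x (Ioo_subset_Icc_self hx)).hasDerivAt (Icc_mem_nhds hx.1 hx.2)
  have hu''i : ∀ x ∈ Ioo (0 : ℝ) 1, HasDerivAt u' (u'' x) x := fun x hx ↦
    (hu'' x (Ioo_subset_Icc_self hx)).hasDerivAt (Icc_mem_nhds hx.1 hx.2)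
  have hu : ContinuousOn u (Icc 0 1) := fun x hx ↦ (hu' x hx).continuousWithinAt
  have hu'c : ContinuousOn u' (Icc 0 1) := fun x hx ↦ (hu'' x hx).continuousWithinAt
  have hper : u' 0 = u' 1 := deriv_eq_deriv_of_integral_eq_zero hε.ne' zero_le_one hu hu'c
    hu'i hu''i hode (hf.intervalIntegrable_of_Icc zero_le_one) hf0 (hu0.trans hu1.symm)
  have hu'M : ∀ x ∈ Icc (0 : ℝ) 1, |u' x| ≤ M := fun x hx ↦
    abs_le_of_neg_mul_deriv_add_eq hε one_pos hu'c hu''i hode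
      (fun t ht ↦ hfM t (Ioo_subset_Icc_self ht)) hper hx
  have hu''M : ∀ x ∈ Ioo (0 : ℝ) 1, |u'' x| ≤ 2 * M / ε := fun x hx ↦ by
    have : u'' x = (u' x - f x) / ε := by field_simp; linarith [hode x hx]
    rw [this, abs_div, abs_of_pos hε]
    gcongr
    linarith [abs_sub (u' x) (f x), hu'M x (Ioo_subset_Icc_self hx),
      hfM x (Ioo_subset_Icc_self hx)]
  have hnh : (n : ℝ) * h = 1 := by rw [hh]; field_simp
  have hhpos : 0 < h := by rw [hh]; positivity
  have hpt : ∀ x ∈ Icc (0 : ℝ) 1, |u x - uI x| ≤ 2 * M / ε * h ^ 2 / 8 := fun x hx ↦ by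
    rw [← hnh] at hx hu hu'i hu''i hu''M
    exact abs_sub_interpolant_le hn hhpos hu hu'i hu''i hu''M hnode haff hx
  have hM : 0 ≤ M := (abs_nonneg _).trans (hfM 0 (left_mem_Icc.mpr zero_le_one))
  calc √(∫ x in (0 : ℝ)..1, (u x - uI x) ^ 2) ≤ 2 * M / ε * h ^ 2 / 8 * √(1 - 0) :=
        sqrt_integral_sq_le zero_le_one hpt
    _ = M * h ^ 2 / ε * (1 / 4) := by norm_num; ring
    _ ≤ M * h ^ 2 / ε * (2 / Real.pi) := by
        gcongr
        · norm_num
        · exact Real.pi_le_four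
    _ = 2 / (ε * Real.pi) * h ^ 2 * M := by field_simp

/-- Let `f` be continuous on `[0,1]` with zero average and let `u` be a
twice continuously differentiable solution on `[0,1]` of `−ε u'' + u' = f` on `(0,1)`
with `u(0) = u(1) = 0`. If `u_I` is the piecewise linear interpolant of `u` on the
uniform mesh `x_i = i·h`, `h = 1/n`, then
`‖u − u_I‖_{L²(0,1)} ≤ (2/(επ)) h² ‖f‖_∞`. -/
theorem statement19 (ε : ℝ) (hε : 0 < ε) (f : ℝ → ℝ)
    (hf : ContinuousOn f (Set.Icc 0 1))
    (hf0 : (∫ s in (0 : ℝ)..1, f s) = 0)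
    (u u' u'' : ℝ → ℝ)
    (hu' : ∀ x ∈ Set.Icc (0 : ℝ) 1, HasDerivWithinAt u (u' x) (Set.Icc 0 1) x)
    (hu'' : ∀ x ∈ Set.Icc (0 : ℝ) 1, HasDerivWithinAt u' (u'' x) (Set.Icc 0 1) x)
    (hu''c : ContinuousOn u'' (Set.Icc 0 1))
    (hode : ∀ x ∈ Set.Ioo (0 : ℝ) 1, -ε * u'' x + u' x = f x)
    (hu0 : u 0 = 0) (hu1 : u 1 = 0)
    (n : ℕ) (hn : 1 ≤ n) (h : ℝ) (hh : h = 1 / n)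
    (uI : ℝ → ℝ)
    (hnode : ∀ i : ℕ, i ≤ n → uI ((i : ℝ) * h) = u ((i : ℝ) * h))
    (haff : ∀ i : ℕ, 1 ≤ i → i ≤ n → ∃ c d : ℝ,
      ∀ x ∈ Set.Icc (((i : ℝ) - 1) * h) ((i : ℝ) * h), uI x = c * x + d) :
    Real.sqrt (∫ x in (0 : ℝ)..1, (u x - uI x) ^ 2) ≤
      2 / (ε * Real.pi) * h ^ 2 * ⨆ s : Set.Icc (0 : ℝ) 1, |f (s : ℝ)| :=
  statement19_general ε hε f hf hf0 u u' u'' hu' hu'' hode hu0 hu1 n hn h hh uI hnode haff
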